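/- arXiv:2306.08694 — 3 statements merged into one kernel-verified Lean document; each statement's English description precedes it below -/
import Mathlib

section
/- (Equation (4.1): admissibility of the eigenvector kernel.) Let T be a generic d-tuple of 2×2 complex matrices with σ(T) = {z_1, z_2} ⊆ B_Δ and joint eigenvectors v_1, v_2. Then ‖Δ(T)‖ ≤ 1 if and only if for all vectors ξ_1, ξ_2 ∈ ℂ^r the 2×2 matrix whose (i,j)-entry is ⟨v_i, v_j⟩ · (⟨ξ_i, ξ_j⟩ − ⟨Δ(z_i)ξ_i, Δ(z_j)ξ_j⟩) is positive semidefinite. -/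
open scoped Matrix.Norms.L2Operator ComplexOrder
open Matrix

noncomputable section

open scoped Classical in
/-- Square root of a positive semidefinite matrix (junk value `0` otherwise). -/
def msqrt {n' : Type*} [Fintype n'] [DecidableEq n'] (M : Matrix n' n' ℂ) : Matrix n' n' ℂ :=
  if h : M.PosSemidef then
    (h.1.eigenvectorUnitary : Matrix n' n' ℂ) * diagonal ((↑) ∘ (√·) ∘ h.1.eigenvalues) *
      (star h.1.eigenvectorUnitary : Matrix n' n' ℂ) else 0

/-- The pseudo-distance `d_Δ`. -/
def dDelta {α m' n' : Type*} [Fintype m'] [Fintype n'] [DecidableEq m'] [DecidableEq n']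
    (Δ : α → Matrix m' n' ℂ) (z w : α) : ℝ :=
  ‖(msqrt (1 - Δ w * (Δ w)ᴴ))⁻¹ * ((Δ z - Δ w) *
      ((1 - (Δ w)ᴴ * Δ z)⁻¹ * msqrt (1 - (Δ w)ᴴ * Δ w)))‖

/-- `B_Δ = {z ∈ E : ‖Δ(z)‖ < 1}`. -/
def BDelta {α m' n' : Type*} [Fintype m'] [Fintype n'] [DecidableEq n'] (E : Set α)
    (Δ : α → Matrix m' n' ℂ) : Set α :=
  {z | z ∈ E ∧ ‖Δ z‖ < 1}

/-- pseudo-hyperbolic distance on the unit disk -/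
def dDisk (a b : ℂ) : ℝ := ‖a - b‖ / ‖1 - (starRingEnd ℂ) b * a‖

/-- elementary tensor `ξ ⊗ v` in `ℂ^m ⊗ ℂ^2`, realized as a function on `m × Fin 2` -/
def tpr {m' : Type*} (ξ : m' → ℂ) (v : Fin 2 → ℂ) : m' × Fin 2 → ℂ :=
  fun p => ξ p.1 * v p.2

/-- inner product, conjugate-linear in the second variable -/
def herm {m' : Type*} [Fintype m'] (ξ η : m' → ℂ) : ℂ :=
  ∑ p, ξ p * (starRingEnd ℂ) (η p)

/-- positive semidefiniteness of a `2 × 2` kernel `(a i j)` -/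
def PSD2 (a : Fin 2 → Fin 2 → ℂ) : Prop :=
  ∀ c : Fin 2 → ℂ, 0 ≤ ∑ i, ∑ j, a i j * c i * (starRingEnd ℂ) (c j)

/-- `T` is a generic tuple with joint eigenvectors `v` and joint eigenvalues `z 0 ≠ z 1`. -/
def IsGenericTuple {d : ℕ} (T : Fin d → Matrix (Fin 2) (Fin 2) ℂ)
    (v : Fin 2 → Fin 2 → ℂ) (z : Fin 2 → Fin d → ℂ) : Prop :=
  LinearIndependent ℂ v ∧ z 0 ≠ z 1 ∧ ∀ i j, T i *ᵥ v j = z j i • v j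

/-- `‖Δ(T)‖ ≤ 1`, where `Δ(T)` is the matrix on `ℂ^s ⊗ ℂ^2` determined by
`Δ(T)(e_i ⊗ v_j) = (Δ(z_j) e_i) ⊗ v_j`. -/
def DeltaTContract {β : Type*} {s r : ℕ} (Δ : β → Matrix (Fin s) (Fin r) ℂ)
    (v : Fin 2 → Fin 2 → ℂ) (z : Fin 2 → β) : Prop :=
  ∀ DT : Matrix (Fin s × Fin 2) (Fin r × Fin 2) ℂ,
    (∀ (i : Fin r) (j : Fin 2),
      DT *ᵥ tpr (Pi.single i 1) (v j) = tpr (Δ (z j) *ᵥ Pi.single i 1) (v j)) →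
    ‖DT‖ ≤ 1

/-- membership in the class `S_{2,gen}(B_Δ)` -/
def MemS2gen {d s r : ℕ} (E : Set (Fin d → ℂ)) (Δ : (Fin d → ℂ) → Matrix (Fin s) (Fin r) ℂ)
    (f : (Fin d → ℂ) → ℂ) : Prop :=
  ∀ (T : Fin d → Matrix (Fin 2) (Fin 2) ℂ) (v : Fin 2 → Fin 2 → ℂ) (z : Fin 2 → Fin d → ℂ),
    IsGenericTuple T v z → (∀ j, z j ∈ BDelta E Δ) → DeltaTContract Δ v z →
    ∀ fT : Matrix (Fin 2) (Fin 2) ℂ, (∀ j, fT *ᵥ v j = f (z j) • v j) → ‖fT‖ ≤ 1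

/-- the Möbius pseudo-distance of a domain `Ω` -/
def dMobius {α : Type*} [NormedAddCommGroup α] [NormedSpace ℂ α] (Ω : Set α) (z w : α) : ℝ :=
  sSup {x | ∃ g : α → ℂ, DifferentiableOn ℂ g Ω ∧ (∀ ζ ∈ Ω, ‖g ζ‖ < 1) ∧ x = dDisk (g z) (g w)}

/-- `Ω` is a complete spectral domain for the diagonalizable tuple with eigenvectors `v` and
joint eigenvalues `z 0, z 1`. -/
def IsCompleteSpectralDomainFor {α : Type*} [NormedAddCommGroup α] [NormedSpace ℂ α]
    (Ω : Set α) (v : Fin 2 → Fin 2 → ℂ) (z : Fin 2 → α) : Prop :=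
  ∀ (n : ℕ) (F : α → Matrix (Fin n) (Fin n) ℂ),
    (∀ i j, DifferentiableOn ℂ (fun ζ => F ζ i j) Ω) →
    ∀ C : ℝ, (∀ ζ ∈ Ω, ‖F ζ‖ ≤ C) →
    ∀ FT : Matrix (Fin n × Fin 2) (Fin n × Fin 2) ℂ,
      (∀ (ξ : Fin n → ℂ) (j : Fin 2), FT *ᵥ tpr ξ (v j) = tpr (F (z j) *ᵥ ξ) (v j)) →
      ‖FT‖ ≤ C

/-!
With `b` the basis of joint eigenvectors, every vector of `ℂ^r ⊗ ℂ²` is `y = Σ_j ξ_j ⊗ b_j`, and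
`Δ(T)` acts on it blockwise: `Δ(T) y = Σ_j Δ(z_j) ξ_j ⊗ b_j`. Expanding both inner products,
`‖y‖² - ‖Δ(T) y‖² = Σ_{i,j} ⟨b_i, b_j⟩ (⟨ξ_i, ξ_j⟩ - ⟨Δ(z_i) ξ_i, Δ(z_j) ξ_j⟩)`, so `Δ(T)` is a
contraction iff this kernel has nonnegative sum for every `ξ`. Replacing `ξ_j` by `c_j ξ_j` turns
that sum into the quadratic form of the kernel at `c`, which gives positive semidefiniteness.
-/

section Herm

variable {m n : Type*} [Fintype m] [Fintype n]

lemma herm_eq_inner (x y : n → ℂ) :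
    herm x y = inner ℂ (WithLp.toLp 2 y) (WithLp.toLp 2 x) := rfl

lemma herm_self (x : n → ℂ) : herm x x = ((‖WithLp.toLp 2 x‖ ^ 2 : ℝ) : ℂ) := by
  rw [herm_eq_inner, inner_self_eq_norm_sq_to_K]
  norm_cast

lemma herm_self_le_herm_self_iff (x : m → ℂ) (y : n → ℂ) :
    herm x x ≤ herm y y ↔ ‖WithLp.toLp 2 x‖ ≤ ‖WithLp.toLp 2 y‖ := by
  rw [herm_self, herm_self, Complex.real_le_real]
  exact pow_le_pow_iff_left₀ (norm_nonneg _) (norm_nonneg _) two_ne_zero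

lemma herm_smul (a b : ℂ) (x y : n → ℂ) :
    herm (a • x) (b • y) = a * starRingEnd ℂ b * herm x y := by
  simp only [herm, Pi.smul_apply, smul_eq_mul, map_mul, Finset.mul_sum]
  exact Finset.sum_congr rfl fun p _ => by ring

lemma herm_sum_left {ι : Type*} (s : Finset ι) (x : ι → n → ℂ) (y : n → ℂ) :
    herm (∑ i ∈ s, x i) y = ∑ i ∈ s, herm (x i) y := by
  simp only [herm, Finset.sum_apply, Finset.sum_mul]
  exact Finset.sum_comm

lemma herm_sum_right {ι : Type*} (s : Finset ι) (x : n → ℂ) (y : ι → n → ℂ) :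
    herm x (∑ i ∈ s, y i) = ∑ i ∈ s, herm x (y i) := by
  simp only [herm, Finset.sum_apply, map_sum, Finset.mul_sum]
  exact Finset.sum_comm

lemma herm_tpr (ξ η : m → ℂ) (w u : Fin 2 → ℂ) :
    herm (tpr ξ w) (tpr η u) = herm ξ η * herm w u := by
  simp only [herm, tpr, Fintype.sum_prod_type, map_mul, Finset.sum_mul_sum]
  exact Finset.sum_congr rfl fun i _ => Finset.sum_congr rfl fun j _ => by ring

lemma norm_le_one_iff_herm_mulVec_le [DecidableEq n] (A : Matrix m n ℂ) :
    ‖A‖ ≤ 1 ↔ ∀ x, herm (A *ᵥ x) (A *ᵥ x) ≤ herm x x := by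
  simp only [herm_self_le_herm_self_iff, l2_opNorm_def,
    ContinuousLinearMap.opNorm_le_iff zero_le_one, one_mul]
  exact ⟨fun h x => h (WithLp.toLp 2 x), fun h x => h x.ofLp⟩

end Herm

section Tensor

variable {m n : Type*}

lemma tpr_smul_right (ξ : n → ℂ) (c : ℂ) (w : Fin 2 → ℂ) : tpr ξ (c • w) = c • tpr ξ w := by
  ext
  simp only [tpr, Pi.smul_apply, smul_eq_mul]
  ring

lemma kroneckerMap_mulVec_tpr [Fintype n] (A : Matrix m n ℂ) (B : Matrix (Fin 2) (Fin 2) ℂ)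
    (ξ : n → ℂ) (w : Fin 2 → ℂ) :
    kroneckerMap (· * ·) A B *ᵥ tpr ξ w = tpr (A *ᵥ ξ) (B *ᵥ w) := by
  funext ⟨p, q⟩
  simp only [mulVec, dotProduct, tpr, kroneckerMap_apply, Fintype.sum_prod_type,
    Finset.sum_mul_sum]
  exact Finset.sum_congr rfl fun i _ => Finset.sum_congr rfl fun j _ => by ring

lemma tpr_eq_sum_repr (b : Module.Basis (Fin 2) ℂ (Fin 2 → ℂ)) (y : n × Fin 2 → ℂ) :
    y = ∑ j, tpr (fun p => b.repr (fun a => y (p, a)) j) (b j) := by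
  funext ⟨p, a⟩
  have h := congrFun (b.sum_repr fun a => y (p, a)) a
  simp only [Finset.sum_apply, Pi.smul_apply, smul_eq_mul] at h
  simp only [Finset.sum_apply, tpr, h]

lemma exists_mulVec_tpr_basis_eq [Fintype n] (b : Module.Basis (Fin 2) ℂ (Fin 2 → ℂ))
    (A : Fin 2 → Matrix m n ℂ) :
    ∃ D : Matrix (m × Fin 2) (n × Fin 2) ℂ, ∀ ξ j, D *ᵥ tpr ξ (b j) = tpr (A j *ᵥ ξ) (b j) := by
  classical
  set C := b.toMatrix (Pi.basisFun ℂ (Fin 2))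
  have hC : ∀ w, C *ᵥ w = b.repr w := fun w => by
    have h := (Pi.basisFun ℂ (Fin 2)).toMatrix_mulVec_repr b w
    rwa [show ⇑((Pi.basisFun ℂ (Fin 2)).repr w) = w from funext fun i => by simp] at h
  -- `vecMulVec (b j) (C j)` is the projection onto `ℂ b_j` along the other basis vector
  refine ⟨∑ j, kroneckerMap (· * ·) (A j) (vecMulVec (b j) (C j)), fun ξ k => ?_⟩
  have hCb : ∀ j, C j ⬝ᵥ b k = if k = j then 1 else 0 := fun j => by
    rw [show C j ⬝ᵥ b k = (C *ᵥ b k) j from rfl, hC, b.repr_self, Finsupp.single_apply]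
  simp only [sum_mulVec, kroneckerMap_mulVec_tpr, vecMulVec_mulVec, op_smul_eq_smul,
    tpr_smul_right]
  simp only [hCb, ite_smul, one_smul, zero_smul, Finset.sum_ite_eq, Finset.mem_univ, if_true]

lemma mulVec_tpr_of_mulVec_tpr_single [Fintype n] [DecidableEq n]
    (D : Matrix (m × Fin 2) (n × Fin 2) ℂ) (A : Matrix m n ℂ) (w : Fin 2 → ℂ)
    (hD : ∀ i, D *ᵥ tpr (Pi.single i 1) w = tpr (A *ᵥ Pi.single i 1) w) (ξ : n → ℂ) :
    D *ᵥ tpr ξ w = tpr (A *ᵥ ξ) w := by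
  have hξ : tpr ξ w = ∑ i, ξ i • tpr (Pi.single i 1) w := by
    funext ⟨p, q⟩
    simp [tpr, Finset.sum_apply, Pi.single_apply]
  rw [hξ, mulVec_sum]
  simp only [mulVec_smul, hD]
  funext ⟨p, q⟩
  simp only [mulVec_single, MulOpposite.op_one, one_smul, Finset.sum_apply, Pi.smul_apply, tpr,
    col_apply, smul_eq_mul, mulVec, dotProduct, Finset.sum_mul]
  exact Finset.sum_congr rfl fun i _ => by ring

lemma herm_sum_tpr_sub_herm_mulVec [Fintype m] [Fintype n] (v : Fin 2 → Fin 2 → ℂ)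
    (D : Matrix (m × Fin 2) (n × Fin 2) ℂ) (A : Fin 2 → Matrix m n ℂ)
    (hD : ∀ ξ j, D *ᵥ tpr ξ (v j) = tpr (A j *ᵥ ξ) (v j)) (ξ : Fin 2 → n → ℂ) :
    herm (∑ j, tpr (ξ j) (v j)) (∑ j, tpr (ξ j) (v j)) -
        herm (D *ᵥ ∑ j, tpr (ξ j) (v j)) (D *ᵥ ∑ j, tpr (ξ j) (v j)) =
      ∑ i, ∑ j, herm (v i) (v j) * (herm (ξ i) (ξ j) - herm (A i *ᵥ ξ i) (A j *ᵥ ξ j)) := by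
  simp only [mulVec_sum, hD, herm_sum_left, herm_sum_right, herm_tpr, ← Finset.sum_sub_distrib]
  rw [Finset.sum_comm]
  exact Finset.sum_congr rfl fun i _ => Finset.sum_congr rfl fun j _ => by ring

end Tensor

theorem deltaTContract_iff_kernel_general {d s r : ℕ}
    (Δ : (Fin d → ℂ) → Matrix (Fin s) (Fin r) ℂ)
    (T : Fin d → Matrix (Fin 2) (Fin 2) ℂ) (v : Fin 2 → Fin 2 → ℂ)
    (zz : Fin 2 → Fin d → ℂ)
    (hT : IsGenericTuple T v zz) :
    DeltaTContract Δ v zz ↔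
      ∀ ξ : Fin 2 → (Fin r → ℂ),
        PSD2 fun i j => herm (v i) (v j) *
          (herm (ξ i) (ξ j) - herm (Δ (zz i) *ᵥ ξ i) (Δ (zz j) *ᵥ ξ j)) := by
  classical
  obtain ⟨b, rfl⟩ : ∃ b : Module.Basis (Fin 2) ℂ (Fin 2 → ℂ), ⇑b = v :=
    ⟨basisOfPiSpaceOfLinearIndependent hT.1, coe_basisOfPiSpaceOfLinearIndependent hT.1⟩
  constructor
  · intro hcontr ξ c
    obtain ⟨D, hD⟩ := exists_mulVec_tpr_basis_eq b fun j => Δ (zz j)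
    have hnorm := (norm_le_one_iff_herm_mulVec_le D).1 (hcontr D fun i j => hD _ j)
      (∑ j, tpr (c j • ξ j) (b j))
    rw [← sub_nonneg, herm_sum_tpr_sub_herm_mulVec b D _ hD] at hnorm
    convert hnorm using 3 with i _ j
    simp only [herm_smul, mulVec_smul]
    ring
  · intro hK D hD
    have hD' := fun ξ j => mulVec_tpr_of_mulVec_tpr_single D _ _ (fun i => hD i j) ξ
    refine (norm_le_one_iff_herm_mulVec_le D).2 fun y => ?_
    rw [tpr_eq_sum_repr b y, ← sub_nonneg, herm_sum_tpr_sub_herm_mulVec b D _ hD']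
    simpa only [Pi.one_apply, map_one, mul_one] using hK _ 1

/-- **Equation (4.1)**: admissibility of the eigenvector kernel: `‖Δ(T)‖ ≤ 1` iff the kernel
`(⟨v_i, v_j⟩ (⟨ξ_i, ξ_j⟩ − ⟨Δ(z_i)ξ_i, Δ(z_j)ξ_j⟩))_{i,j}` is positive semidefinite for all
`ξ_1, ξ_2 ∈ ℂ^r`. -/
theorem deltaTContract_iff_kernel {d s r : ℕ} (E : Set (Fin d → ℂ))
    (Δ : (Fin d → ℂ) → Matrix (Fin s) (Fin r) ℂ)
    (T : Fin d → Matrix (Fin 2) (Fin 2) ℂ) (v : Fin 2 → Fin 2 → ℂ)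
    (zz : Fin 2 → Fin d → ℂ)
    (hT : IsGenericTuple T v zz) (hzz : ∀ j, zz j ∈ BDelta E Δ) :
    DeltaTContract Δ v zz ↔
      ∀ ξ : Fin 2 → (Fin r → ℂ),
        PSD2 fun i j => herm (v i) (v j) *
          (herm (ξ i) (ξ j) - herm (Δ (zz i) *ᵥ ξ i) (Δ (zz j) *ᵥ ξ j)) :=
  deltaTContract_iff_kernel_general Δ T v zz hT
end
end

section
/- (Harris-type matrix Möbius contraction lemma, used in the proof of Proposition 5.1.) Let A and B be s×r complex matrices with ‖A‖ ≤ 1 and ‖B‖ < 1 (operator norms). Then I − B*A and I − A*B are invertible, the matrix G := (I − BB*)^{−1/2} (A − B) (I − B*A)^{−1} (I − B*B)^{1/2} satisfies I − G*G = (I − B*B)^{1/2} (I − A*B)^{−1} (I − A*A) (I − B*A)^{−1} (I − B*B)^{1/2}, this matrix is positive semidefinite, and consequently ‖G‖ ≤ 1. -/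
open scoped Matrix.Norms.L2Operator ComplexOrder
open Matrix

noncomputable section

/-!
With `P = (1 - Bᴴ A)⁻¹ (1 - Bᴴ B)^{1/2}` one has `Pᴴ (1 - Aᴴ B) (1 - Bᴴ B)⁻¹ (1 - Bᴴ A) P = 1` and
`Gᴴ G = Pᴴ (A - B)ᴴ (1 - B Bᴴ)⁻¹ (A - B) P`. Harris' identity
`1 - D A = (1 - D B) (1 - C B)⁻¹ (1 - C A) - (D - C) (1 - B C)⁻¹ (A - B)`, valid for all matrices
with `1 - C B` invertible, then gives `1 - Gᴴ G = Pᴴ (1 - Aᴴ A) P ≥ 0`, and a matrix `M` is a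
contraction exactly when `1 - Mᴴ M ≥ 0`. Invertibility comes from the Neumann series, as
`‖Bᴴ A‖ ≤ ‖B‖ ‖A‖ < 1`.
-/

section MatrixSqrt

variable {n : Type*} [Fintype n] [DecidableEq n] {M : Matrix n n ℂ}

lemma msqrt_eq_cfc (hM : M.PosSemidef) : msqrt M = cfc Real.sqrt M := by
  rw [msqrt, dif_pos hM, hM.1.cfc_eq, IsHermitian.cfc, Unitary.conjStarAlgAut_apply]
  rfl

lemma msqrt_mul_self (hM : M.PosSemidef) : msqrt M * msqrt M = M := by
  rw [msqrt_eq_cfc hM, ← cfc_mul Real.sqrt Real.sqrt M]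
  conv_rhs => rw [← cfc_id' ℝ M hM.1]
  refine cfc_congr fun x hx => Real.mul_self_sqrt ?_
  obtain ⟨i, rfl⟩ := hM.1.spectrum_real_eq_range_eigenvalues ▸ hx
  exact hM.eigenvalues_nonneg i

lemma isHermitian_msqrt (hM : M.PosSemidef) : (msqrt M).IsHermitian := by
  rw [msqrt_eq_cfc hM]
  exact cfc_predicate Real.sqrt M

end MatrixSqrt

section HarrisIdentity

variable {R m n : Type*} [CommRing R] [Fintype m] [Fintype n] [DecidableEq m] [DecidableEq n]

lemma inv_one_sub_mul_comm {B : Matrix m n R} {C : Matrix n m R} (h : IsUnit (1 - C * B)) :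
    (1 - B * C)⁻¹ = 1 + B * ((1 - C * B)⁻¹ * C) := by
  refine inv_eq_right_inv ?_
  have hX : (1 - C * B) * (1 - C * B)⁻¹ = 1 := mul_nonsing_inv _ ((isUnit_iff_isUnit_det _).mp h)
  calc (1 - B * C) * (1 + B * ((1 - C * B)⁻¹ * C))
      = 1 - B * C + B * (((1 - C * B) * (1 - C * B)⁻¹) * C) := by
        simp only [Matrix.mul_add, Matrix.sub_mul, Matrix.mul_sub, Matrix.one_mul,
          Matrix.mul_one, Matrix.mul_assoc]
    _ = 1 := by rw [hX, Matrix.one_mul, sub_add_cancel]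

lemma one_sub_mul_eq_harris (A B : Matrix m n R) (C D : Matrix n m R) (h : IsUnit (1 - C * B)) :
    1 - D * A =
      (1 - D * B) * ((1 - C * B)⁻¹ * (1 - C * A)) - (D - C) * ((1 - B * C)⁻¹ * (A - B)) := by
  rw [inv_one_sub_mul_comm h]
  set X := (1 - C * B)⁻¹
  have hXl : X * (1 - C * B) = 1 := nonsing_inv_mul _ ((isUnit_iff_isUnit_det _).mp h)
  have hXr : (1 - C * B) * X = 1 := mul_nonsing_inv _ ((isUnit_iff_isUnit_det _).mp h)
  have hCAB : 1 - C * A + C * (A - B) = 1 - C * B := by rw [Matrix.mul_sub]; abel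
  have hDCAB : (D - C) * (A - B) + C * (A - B) = D * (A - B) := by rw [Matrix.sub_mul]; abel
  have hDCB : (D - C) * B = (1 - C * B) - (1 - D * B) := by rw [Matrix.sub_mul]; abel
  calc 1 - D * A = (1 - D * B) * (X * (1 - C * B)) - D * (A - B) := by
        rw [hXl, Matrix.mul_one, Matrix.mul_sub]; abel
    _ = (1 - D * B) * (X * (1 - C * A + C * (A - B))) - ((D - C) * (A - B) + C * (A - B)) := by
        rw [hCAB, hDCAB]
    _ = (1 - D * B) * (X * (1 - C * A))
          - ((D - C) * (A - B) + ((1 - C * B) - (1 - D * B)) * (X * (C * (A - B)))) := by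
        rw [Matrix.sub_mul (1 - C * B), ← Matrix.mul_assoc (1 - C * B) X, hXr, Matrix.one_mul]
        simp only [Matrix.mul_add]
        abel
    _ = _ := by
        rw [← hDCB]
        simp only [Matrix.add_mul, Matrix.mul_add, Matrix.one_mul, Matrix.mul_assoc]

end HarrisIdentity

section Contraction

variable {𝕜 m n : Type*} [RCLike 𝕜] [Fintype m] [Fintype n] [DecidableEq n]

lemma star_dotProduct_self_eq_norm_sq {ι : Type*} [Fintype ι] (x : ι → 𝕜) :
    star x ⬝ᵥ x = ((‖WithLp.toLp 2 x‖ ^ 2 : ℝ) : 𝕜) := by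
  rw [dotProduct_comm, ← EuclideanSpace.inner_toLp_toLp, inner_self_eq_norm_sq_to_K]
  push_cast
  rfl

lemma star_dotProduct_one_sub_conjTranspose_mul_self_mulVec (M : Matrix m n 𝕜) (x : n → 𝕜) :
    star x ⬝ᵥ ((1 - Mᴴ * M) *ᵥ x) =
      ((‖WithLp.toLp 2 x‖ ^ 2 - ‖WithLp.toLp 2 (M *ᵥ x)‖ ^ 2 : ℝ) : 𝕜) := by
  rw [sub_mulVec, dotProduct_sub, one_mulVec, ← mulVec_mulVec, dotProduct_mulVec,
    ← star_mulVec, star_dotProduct_self_eq_norm_sq, star_dotProduct_self_eq_norm_sq]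
  push_cast
  rfl

lemma posSemidef_one_sub_conjTranspose_mul_self_iff {M : Matrix m n 𝕜} :
    (1 - Mᴴ * M).PosSemidef ↔ ‖M‖ ≤ 1 := by
  have hH : (1 - Mᴴ * M).IsHermitian := isHermitian_one.sub (isHermitian_conjTranspose_mul_self M)
  have hsq (x : n → 𝕜) : ‖WithLp.toLp 2 (M *ᵥ x)‖ ^ 2 ≤ ‖WithLp.toLp 2 x‖ ^ 2 ↔
      ‖WithLp.toLp 2 (M *ᵥ x)‖ ≤ ‖WithLp.toLp 2 x‖ :=
    pow_le_pow_iff_left₀ (norm_nonneg _) (norm_nonneg _) two_ne_zero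
  simp only [posSemidef_iff_dotProduct_mulVec, hH, true_and,
    star_dotProduct_one_sub_conjTranspose_mul_self_mulVec, RCLike.ofReal_nonneg, sub_nonneg, hsq]
  refine ⟨fun h => ?_, fun h x => ?_⟩
  · rw [l2_opNorm_def]
    exact ContinuousLinearMap.opNorm_le_bound _ zero_le_one fun x => (one_mul ‖x‖).symm ▸ h x.ofLp
  · exact (M.l2_opNorm_mulVec (WithLp.toLp 2 x)).trans (mul_le_of_le_one_left (norm_nonneg _) h)

lemma posSemidef_moebius_defect {A B : Matrix m n 𝕜} {S : Matrix n n 𝕜} (hA : ‖A‖ ≤ 1)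
    (hSH : Sᴴ = S) :
    (S * ((1 - Aᴴ * B)⁻¹ * ((1 - Aᴴ * A) * ((1 - Bᴴ * A)⁻¹ * S)))).PosSemidef := by
  convert (posSemidef_one_sub_conjTranspose_mul_self_iff.mpr hA).conjTranspose_mul_mul_same
    ((1 - Bᴴ * A)⁻¹ * S) using 1
  simp only [conjTranspose_mul, conjTranspose_nonsing_inv, conjTranspose_sub, conjTranspose_one,
    conjTranspose_conjTranspose, hSH, Matrix.mul_assoc]

variable [DecidableEq m]

lemma isUnit_one_sub_conjTranspose_mul {X Y : Matrix m n 𝕜} (h : ‖X‖ * ‖Y‖ < 1) :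
    IsUnit (1 - Xᴴ * Y) :=
  isUnit_one_sub_of_norm_lt_one <| (l2_opNorm_mul _ _).trans_lt <| by
    rwa [l2_opNorm_conjTranspose]

lemma one_sub_conjTranspose_mul_self_eq_moebius {A B G : Matrix m n 𝕜} {S : Matrix n n 𝕜}
    {T : Matrix m m 𝕜} (hS : S * S = 1 - Bᴴ * B) (hT : T * T = 1 - B * Bᴴ) (hSH : Sᴴ = S)
    (hTH : Tᴴ = T) (hSu : IsUnit S) (hBA : IsUnit (1 - Bᴴ * A))
    (hG : G = T⁻¹ * ((A - B) * ((1 - Bᴴ * A)⁻¹ * S))) :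
    1 - Gᴴ * G = S * ((1 - Aᴴ * B)⁻¹ * ((1 - Aᴴ * A) * ((1 - Bᴴ * A)⁻¹ * S))) := by
  have hBAd := (isUnit_iff_isUnit_det _).mp hBA
  have hAB : 1 - Aᴴ * B = (1 - Bᴴ * A)ᴴ := by
    simp only [conjTranspose_sub, conjTranspose_one, conjTranspose_mul, conjTranspose_conjTranspose]
  have hABd : IsUnit (1 - Aᴴ * B).det := by rw [hAB, det_conjTranspose]; exact hBAd.star
  have hSd := (isUnit_iff_isUnit_det _).mp hSu
  set P := (1 - Bᴴ * A)⁻¹ * S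
  have hPH : Pᴴ = S * (1 - Aᴴ * B)⁻¹ := by
    rw [conjTranspose_mul, hSH, conjTranspose_nonsing_inv, hAB]
  have hGG : Gᴴ * G = Pᴴ * ((Aᴴ - Bᴴ) * ((1 - B * Bᴴ)⁻¹ * (A - B))) * P := by
    rw [hG, ← hT, Matrix.mul_inv_rev]
    simp only [conjTranspose_mul, conjTranspose_sub, conjTranspose_nonsing_inv, hTH, P,
      Matrix.mul_assoc]
  have hone : Pᴴ * ((1 - Aᴴ * B) * ((1 - Bᴴ * B)⁻¹ * (1 - Bᴴ * A))) * P = 1 := by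
    rw [hPH, ← hS, Matrix.mul_inv_rev]
    simp only [P, Matrix.mul_assoc, nonsing_inv_mul_cancel_left _ _ hABd,
      mul_nonsing_inv_cancel_left _ _ hBAd]
    rw [nonsing_inv_mul _ hSd, Matrix.mul_one, mul_nonsing_inv _ hSd]
  calc 1 - Gᴴ * G
      = Pᴴ * ((1 - Aᴴ * B) * ((1 - Bᴴ * B)⁻¹ * (1 - Bᴴ * A))
          - (Aᴴ - Bᴴ) * ((1 - B * Bᴴ)⁻¹ * (A - B))) * P := by
        rw [Matrix.mul_sub, Matrix.sub_mul, hone, hGG]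
    _ = Pᴴ * (1 - Aᴴ * A) * P := by
        rw [← one_sub_mul_eq_harris A B Bᴴ Aᴴ (hS ▸ hSu.mul hSu)]
    _ = S * ((1 - Aᴴ * B)⁻¹ * ((1 - Aᴴ * A) * ((1 - Bᴴ * A)⁻¹ * S))) := by
        rw [hPH]
        simp only [P, Matrix.mul_assoc]

end Contraction

/-- **Harris-type matrix Möbius contraction lemma** used in the proof of Proposition 5.1. -/
theorem harris_moebius_contraction {s r : ℕ} (A B : Matrix (Fin s) (Fin r) ℂ)
    (hA : ‖A‖ ≤ 1) (hB : ‖B‖ < 1)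
    (G : Matrix (Fin s) (Fin r) ℂ)
    (hG : G = (msqrt (1 - B * Bᴴ))⁻¹ * ((A - B) * ((1 - Bᴴ * A)⁻¹ * msqrt (1 - Bᴴ * B)))) :
    IsUnit (1 - Bᴴ * A) ∧ IsUnit (1 - Aᴴ * B) ∧
    1 - Gᴴ * G =
      msqrt (1 - Bᴴ * B) *
        ((1 - Aᴴ * B)⁻¹ * ((1 - Aᴴ * A) * ((1 - Bᴴ * A)⁻¹ * msqrt (1 - Bᴴ * B)))) ∧
    (msqrt (1 - Bᴴ * B) *
        ((1 - Aᴴ * B)⁻¹ * ((1 - Aᴴ * A) * ((1 - Bᴴ * A)⁻¹ * msqrt (1 - Bᴴ * B))))).PosSemidef ∧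
    ‖G‖ ≤ 1 := by
  have hBA : IsUnit (1 - Bᴴ * A) :=
    isUnit_one_sub_conjTranspose_mul ((mul_le_of_le_one_right (norm_nonneg B) hA).trans_lt hB)
  have hAB : IsUnit (1 - Aᴴ * B) :=
    isUnit_one_sub_conjTranspose_mul ((mul_le_of_le_one_left (norm_nonneg B) hA).trans_lt hB)
  have hBB : (1 - Bᴴ * B).PosSemidef := posSemidef_one_sub_conjTranspose_mul_self_iff.mpr hB.le
  have hBBt : (1 - B * Bᴴ).PosSemidef := by
    simpa using posSemidef_one_sub_conjTranspose_mul_self_iff.mpr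
      ((l2_opNorm_conjTranspose B).trans_lt hB).le
  have hSu : IsUnit (msqrt (1 - Bᴴ * B)) := by
    rw [← isUnit_mul_self_iff, msqrt_mul_self hBB]
    exact isUnit_one_sub_conjTranspose_mul
      ((mul_le_of_le_one_left (norm_nonneg B) hB.le).trans_lt hB)
  have hdefect := one_sub_conjTranspose_mul_self_eq_moebius (msqrt_mul_self hBB)
    (msqrt_mul_self hBBt) (isHermitian_msqrt hBB) (isHermitian_msqrt hBBt) hSu hBA hG
  have hpsd := posSemidef_moebius_defect (B := B) hA (isHermitian_msqrt hBB)
  exact ⟨hBA, hAB, hdefect, hpsd, posSemidef_one_sub_conjTranspose_mul_self_iff.mp (hdefect ▸ hpsd)⟩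
end
end

section
/- (Proposition 5.5: product formula for d_Δ.) Let Δ_1 be an s_1×r_1 matrix of holomorphic functions on an open set E_1 ⊆ ℂ^{d_1} and Δ_2 an s_2×r_2 matrix of holomorphic functions on an open set E_2 ⊆ ℂ^{d_2}, and define (Δ_1 ⊕ Δ_2)(z_1, z_2) as the block-diagonal matrix with blocks Δ_1(z_1) and Δ_2(z_2), so that B_{Δ_1⊕Δ_2} = B_{Δ_1} × B_{Δ_2}. Then for all (z_1, z_2), (w_1, w_2) ∈ B_{Δ_1} × B_{Δ_2}: d_{Δ_1⊕Δ_2}((z_1, z_2), (w_1, w_2)) = max{ d_{Δ_1}(z_1, w_1), d_{Δ_2}(z_2, w_2) }. -/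
open scoped Matrix.Norms.L2Operator ComplexOrder
open Matrix

noncomputable section

/-!
Every operation entering `d_Δ` (adjoint, products, `1 - ·`, inverse, and the positive square
root, by uniqueness of the latter) acts blockwise on block-diagonal matrices. So the matrix whose
norm is `d_{Δ₁⊕Δ₂}((z₁,z₂),(w₁,w₂))` is block diagonal, with the matrices defining
`d_{Δ₁}(z₁,w₁)` and `d_{Δ₂}(z₂,w₂)` as blocks, and the `ℓ²` operator norm of a block-diagonal
matrix is the larger of the norms of its blocks. Blockwise inversion needs both blocks to be
invertible (the matrix inverse is junk otherwise); on `B_Δ` this follows from the Neumann series.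
-/

open scoped MatrixOrder

namespace Matrix

section Blocks

variable {α l m n o : Type*}

lemma fromBlocks_sub [Sub α] (A A' : Matrix n l α) (B B' : Matrix n m α) (C C' : Matrix o l α)
    (D D' : Matrix o m α) :
    fromBlocks A B C D - fromBlocks A' B' C' D' =
      fromBlocks (A - A') (B - B') (C - C') (D - D') := by
  ext (_ | _) (_ | _) <;> rfl

lemma one_sub_fromBlocks_zero [DecidableEq l] [DecidableEq m] [Ring α]
    (A : Matrix l l α) (D : Matrix m m α) :
    1 - fromBlocks A 0 0 D = fromBlocks (1 - A) 0 0 (1 - D) := by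
  rw [← fromBlocks_one, fromBlocks_sub, sub_zero, sub_zero]

lemma inv_fromBlocks_zero [Fintype l] [Fintype m] [DecidableEq l] [DecidableEq m] [CommRing α]
    {A : Matrix l l α} {D : Matrix m m α} (hA : IsUnit A) (hD : IsUnit D) :
    (fromBlocks A 0 0 D)⁻¹ = fromBlocks A⁻¹ 0 0 D⁻¹ := by
  simpa using inv_fromBlocks_zero₂₁_of_isUnit_iff A 0 D (iff_of_true hA hD)

lemma PosSemidef.fromBlocks_zero [Fintype l] [Fintype m] [CommRing α] [PartialOrder α]
    [StarRing α] [StarOrderedRing α] {P : Matrix l l α} {Q : Matrix m m α}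
    (hP : P.PosSemidef) (hQ : Q.PosSemidef) : (fromBlocks P 0 0 Q).PosSemidef := by
  rw [posSemidef_iff_dotProduct_mulVec] at hP hQ ⊢
  refine ⟨?_, fun x => ?_⟩
  · simp [IsHermitian, fromBlocks_conjTranspose, hP.1.eq, hQ.1.eq]
  · rw [← Sum.elim_comp_inl_inr x, fromBlocks_mulVec, Function.star_sumElim,
      sumElim_dotProduct_sumElim]
    simp only [zero_mulVec, add_zero, zero_add]
    exact add_nonneg (hP.2 _) (hQ.2 _)

end Blocks

section L2OpNorm

variable {𝕜 : Type*} [RCLike 𝕜] {m n p q : Type*} [Fintype m] [Fintype n] [Fintype p] [Fintype q]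

lemma _root_.EuclideanSpace.norm_toLp_sumElim_sq (x : n → 𝕜) (y : q → 𝕜) :
    ‖(WithLp.toLp 2 (Sum.elim x y) : EuclideanSpace 𝕜 (n ⊕ q))‖ ^ 2 =
      ‖(WithLp.toLp 2 x : EuclideanSpace 𝕜 n)‖ ^ 2 +
        ‖(WithLp.toLp 2 y : EuclideanSpace 𝕜 q)‖ ^ 2 := by
  simp only [EuclideanSpace.norm_sq_eq, Fintype.sum_sum_type]
  rfl

lemma _root_.EuclideanSpace.norm_toLp_sumElim_zero (x : n → 𝕜) :
    ‖(WithLp.toLp 2 (Sum.elim x 0) : EuclideanSpace 𝕜 (n ⊕ q))‖ =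
      ‖(WithLp.toLp 2 x : EuclideanSpace 𝕜 n)‖ := by
  have h := EuclideanSpace.norm_toLp_sumElim_sq x (0 : q → 𝕜)
  rw [WithLp.toLp_zero, norm_zero, zero_pow two_ne_zero, add_zero] at h
  exact (pow_left_inj₀ (norm_nonneg _) (norm_nonneg _) two_ne_zero).mp h

lemma _root_.EuclideanSpace.norm_toLp_zero_sumElim (y : q → 𝕜) :
    ‖(WithLp.toLp 2 (Sum.elim 0 y) : EuclideanSpace 𝕜 (n ⊕ q))‖ =
      ‖(WithLp.toLp 2 y : EuclideanSpace 𝕜 q)‖ := by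
  have h := EuclideanSpace.norm_toLp_sumElim_sq (0 : n → 𝕜) y
  rw [WithLp.toLp_zero, norm_zero, zero_pow two_ne_zero, zero_add] at h
  exact (pow_left_inj₀ (norm_nonneg _) (norm_nonneg _) two_ne_zero).mp h

lemma l2_opNorm_le_of_mulVec [DecidableEq n] (A : Matrix m n 𝕜) {C : ℝ} (hC : 0 ≤ C)
    (h : ∀ x : n → 𝕜, ‖(WithLp.toLp 2 (A *ᵥ x) : EuclideanSpace 𝕜 m)‖ ≤
      C * ‖(WithLp.toLp 2 x : EuclideanSpace 𝕜 n)‖) :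
    ‖A‖ ≤ C :=
  ContinuousLinearMap.opNorm_le_bound _ hC fun x => h x.ofLp

lemma l2_opNorm_fromBlocks_zero [DecidableEq n] [DecidableEq q] (A : Matrix m n 𝕜)
    (D : Matrix p q 𝕜) : ‖fromBlocks A 0 0 D‖ = max ‖A‖ ‖D‖ := by
  have hmulVec (x : n → 𝕜) (y : q → 𝕜) :
      fromBlocks A 0 0 D *ᵥ Sum.elim x y = Sum.elim (A *ᵥ x) (D *ᵥ y) := by
    simp [fromBlocks_mulVec]
  refine le_antisymm (l2_opNorm_le_of_mulVec _ (by positivity) fun x => ?_) (max_le ?_ ?_)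
  · have hA (y : n → 𝕜) : ‖(WithLp.toLp 2 (A *ᵥ y) : EuclideanSpace 𝕜 m)‖ ≤
        max ‖A‖ ‖D‖ * ‖(WithLp.toLp 2 y : EuclideanSpace 𝕜 n)‖ :=
      (l2_opNorm_mulVec A _).trans (by gcongr; exact le_max_left ..)
    have hD (y : q → 𝕜) : ‖(WithLp.toLp 2 (D *ᵥ y) : EuclideanSpace 𝕜 p)‖ ≤
        max ‖A‖ ‖D‖ * ‖(WithLp.toLp 2 y : EuclideanSpace 𝕜 q)‖ :=
      (l2_opNorm_mulVec D _).trans (by gcongr; exact le_max_right ..)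
    rw [← Sum.elim_comp_inl_inr x, hmulVec]
    refine pow_le_pow_iff_left₀ (norm_nonneg _) (by positivity) two_ne_zero |>.mp ?_
    rw [mul_pow, EuclideanSpace.norm_toLp_sumElim_sq, EuclideanSpace.norm_toLp_sumElim_sq, mul_add,
      ← mul_pow, ← mul_pow]
    exact add_le_add (pow_le_pow_left₀ (norm_nonneg _) (hA _) 2)
      (pow_le_pow_left₀ (norm_nonneg _) (hD _) 2)
  · refine l2_opNorm_le_of_mulVec _ (norm_nonneg _) fun x => ?_
    have h := l2_opNorm_mulVec (fromBlocks A 0 0 D) (WithLp.toLp 2 (Sum.elim x 0))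
    simpa [hmulVec, EuclideanSpace.norm_toLp_sumElim_zero] using h
  · refine l2_opNorm_le_of_mulVec _ (norm_nonneg _) fun y => ?_
    have h := l2_opNorm_mulVec (fromBlocks A 0 0 D) (WithLp.toLp 2 (Sum.elim 0 y))
    simpa [hmulVec, EuclideanSpace.norm_toLp_zero_sumElim] using h

end L2OpNorm

section Contractions

variable {m n : Type*} [Fintype m] [Fintype n] [DecidableEq n]

lemma posSemidef_one_sub_conjTranspose_mul_self {A : Matrix m n ℂ} (h : ‖A‖ ≤ 1) :
    (1 - Aᴴ * A).PosSemidef := by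
  rw [← nonneg_iff_posSemidef, sub_nonneg]
  calc Aᴴ * A ≤ algebraMap ℝ _ ‖Aᴴ * A‖ :=
        IsSelfAdjoint.le_algebraMap_norm_self (isHermitian_conjTranspose_mul_self A)
    _ ≤ algebraMap ℝ _ 1 := by
        gcongr
        rw [l2_opNorm_conjTranspose_mul_self]
        exact mul_le_one₀ h (norm_nonneg A) h
    _ = 1 := map_one _

variable [DecidableEq m]

lemma posSemidef_one_sub_self_mul_conjTranspose {A : Matrix m n ℂ} (h : ‖A‖ ≤ 1) :
    (1 - A * Aᴴ).PosSemidef := by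
  simpa using posSemidef_one_sub_conjTranspose_mul_self (A := Aᴴ)
    (by rwa [l2_opNorm_conjTranspose])

lemma isUnit_one_sub_conjTranspose_mul {W Z : Matrix m n ℂ} (hW : ‖W‖ < 1) (hZ : ‖Z‖ ≤ 1) :
    IsUnit (1 - Wᴴ * Z) :=
  isUnit_one_sub_of_norm_lt_one <| (l2_opNorm_mul _ _).trans_lt <|
    mul_lt_one_of_nonneg_of_lt_one_left (norm_nonneg _) (by rwa [l2_opNorm_conjTranspose]) hZ

end Contractions

end Matrix

section Msqrt

variable {n q : Type*} [Fintype n] [Fintype q] [DecidableEq n] [DecidableEq q]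

lemma msqrt_eq_sqrt {P : Matrix n n ℂ} (hP : P.PosSemidef) : msqrt P = CFC.sqrt P := by
  rw [msqrt, dif_pos hP, CFC.sqrt_eq_cfc, cfc_nnreal_eq_real _ P hP.nonneg, hP.1.cfc_eq]
  simp only [IsHermitian.cfc, Unitary.conjStarAlgAut_apply]
  congr 3
  funext i
  simp [hP.eigenvalues_nonneg i]

lemma msqrt_mul_self_s9 {P : Matrix n n ℂ} (hP : P.PosSemidef) : msqrt P * msqrt P = P := by
  rw [msqrt_eq_sqrt hP, CFC.sqrt_mul_sqrt_self P hP.nonneg]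

lemma isUnit_msqrt {P : Matrix n n ℂ} (hP : P.PosSemidef) (hunit : IsUnit P) :
    IsUnit (msqrt P) :=
  isUnit_of_mul_isUnit_left ((msqrt_mul_self_s9 hP).symm ▸ hunit)

lemma msqrt_fromBlocks_zero {P : Matrix n n ℂ} {Q : Matrix q q ℂ}
    (hP : P.PosSemidef) (hQ : Q.PosSemidef) :
    msqrt (fromBlocks P 0 0 Q) = fromBlocks (msqrt P) 0 0 (msqrt Q) := by
  rw [msqrt_eq_sqrt (hP.fromBlocks_zero hQ), msqrt_eq_sqrt hP, msqrt_eq_sqrt hQ]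
  refine CFC.sqrt_unique ?_ (PosSemidef.fromBlocks_zero (CFC.sqrt_nonneg P).posSemidef
    (CFC.sqrt_nonneg Q).posSemidef).nonneg
  simp [fromBlocks_multiply, CFC.sqrt_mul_sqrt_self P hP.nonneg,
    CFC.sqrt_mul_sqrt_self Q hQ.nonneg]

lemma isUnit_msqrt_one_sub_self_mul_conjTranspose {m : Type*} [Fintype m] [DecidableEq m]
    {A : Matrix n m ℂ} (h : ‖A‖ < 1) : IsUnit (msqrt (1 - A * Aᴴ)) :=
  isUnit_msqrt (posSemidef_one_sub_self_mul_conjTranspose h.le) <|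
    isUnit_one_sub_of_norm_lt_one <| (l2_opNorm_mul _ _).trans_lt <|
      mul_lt_one_of_nonneg_of_lt_one_left (norm_nonneg _) h (l2_opNorm_conjTranspose A ▸ h.le)

end Msqrt

lemma dDelta_fromBlocks_zero {α β m n p q : Type*} [Fintype m] [Fintype n] [Fintype p]
    [Fintype q] [DecidableEq m] [DecidableEq n] [DecidableEq p] [DecidableEq q]
    (Δ₁ : α → Matrix m n ℂ) (Δ₂ : β → Matrix p q ℂ) {z₁ w₁ : α} {z₂ w₂ : β}
    (hz₁ : ‖Δ₁ z₁‖ < 1) (hw₁ : ‖Δ₁ w₁‖ < 1) (hz₂ : ‖Δ₂ z₂‖ < 1) (hw₂ : ‖Δ₂ w₂‖ < 1) :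
    dDelta (fun x : α × β => fromBlocks (Δ₁ x.1) 0 0 (Δ₂ x.2)) (z₁, z₂) (w₁, w₂) =
      max (dDelta Δ₁ z₁ w₁) (dDelta Δ₂ z₂ w₂) := by
  simp only [dDelta, fromBlocks_conjTranspose, conjTranspose_zero, fromBlocks_multiply,
    Matrix.mul_zero, Matrix.zero_mul, add_zero, zero_add, fromBlocks_sub, sub_zero,
    one_sub_fromBlocks_zero]
  rw [msqrt_fromBlocks_zero (posSemidef_one_sub_self_mul_conjTranspose hw₁.le)
      (posSemidef_one_sub_self_mul_conjTranspose hw₂.le),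
    msqrt_fromBlocks_zero (posSemidef_one_sub_conjTranspose_mul_self hw₁.le)
      (posSemidef_one_sub_conjTranspose_mul_self hw₂.le),
    inv_fromBlocks_zero (isUnit_msqrt_one_sub_self_mul_conjTranspose hw₁)
      (isUnit_msqrt_one_sub_self_mul_conjTranspose hw₂),
    inv_fromBlocks_zero (isUnit_one_sub_conjTranspose_mul hw₁ hz₁.le)
      (isUnit_one_sub_conjTranspose_mul hw₂ hz₂.le)]
  simp only [fromBlocks_multiply, Matrix.mul_zero, Matrix.zero_mul, add_zero, zero_add]
  exact l2_opNorm_fromBlocks_zero _ _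

theorem dDelta_prod_general {d₁ d₂ s₁ r₁ s₂ r₂ : ℕ}
    (E₁ : Set (Fin d₁ → ℂ)) (E₂ : Set (Fin d₂ → ℂ))
    (Δ₁ : (Fin d₁ → ℂ) → Matrix (Fin s₁) (Fin r₁) ℂ)
    (Δ₂ : (Fin d₂ → ℂ) → Matrix (Fin s₂) (Fin r₂) ℂ)
    (z₁ w₁ : Fin d₁ → ℂ) (z₂ w₂ : Fin d₂ → ℂ)
    (hz₁ : z₁ ∈ BDelta E₁ Δ₁) (hw₁ : w₁ ∈ BDelta E₁ Δ₁)
    (hz₂ : z₂ ∈ BDelta E₂ Δ₂) (hw₂ : w₂ ∈ BDelta E₂ Δ₂) :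
    dDelta (fun p : (Fin d₁ → ℂ) × (Fin d₂ → ℂ) =>
        Matrix.fromBlocks (Δ₁ p.1) 0 0 (Δ₂ p.2)) (z₁, z₂) (w₁, w₂) =
      max (dDelta Δ₁ z₁ w₁) (dDelta Δ₂ z₂ w₂) :=
  dDelta_fromBlocks_zero Δ₁ Δ₂ hz₁.2 hw₁.2 hz₂.2 hw₂.2

/-- **Proposition 5.5 (product formula)**:
`d_{Δ₁⊕Δ₂}((z₁,z₂),(w₁,w₂)) = max (d_{Δ₁}(z₁,w₁)) (d_{Δ₂}(z₂,w₂))`. -/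
theorem dDelta_prod {d₁ d₂ s₁ r₁ s₂ r₂ : ℕ}
    (E₁ : Set (Fin d₁ → ℂ)) (E₂ : Set (Fin d₂ → ℂ)) (hE₁ : IsOpen E₁) (hE₂ : IsOpen E₂)
    (Δ₁ : (Fin d₁ → ℂ) → Matrix (Fin s₁) (Fin r₁) ℂ)
    (Δ₂ : (Fin d₂ → ℂ) → Matrix (Fin s₂) (Fin r₂) ℂ)
    (hΔ₁ : ∀ p q, DifferentiableOn ℂ (fun ζ => Δ₁ ζ p q) E₁)
    (hΔ₂ : ∀ p q, DifferentiableOn ℂ (fun ζ => Δ₂ ζ p q) E₂)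
    (z₁ w₁ : Fin d₁ → ℂ) (z₂ w₂ : Fin d₂ → ℂ)
    (hz₁ : z₁ ∈ BDelta E₁ Δ₁) (hw₁ : w₁ ∈ BDelta E₁ Δ₁)
    (hz₂ : z₂ ∈ BDelta E₂ Δ₂) (hw₂ : w₂ ∈ BDelta E₂ Δ₂) :
    dDelta (fun p : (Fin d₁ → ℂ) × (Fin d₂ → ℂ) =>
        Matrix.fromBlocks (Δ₁ p.1) 0 0 (Δ₂ p.2)) (z₁, z₂) (w₁, w₂) =
      max (dDelta Δ₁ z₁ w₁) (dDelta Δ₂ z₂ w₂) :=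
  dDelta_prod_general E₁ E₂ Δ₁ Δ₂ z₁ w₁ z₂ w₂ hz₁ hw₁ hz₂ hw₂
end
end
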